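/- arXiv:0803.1067 — 3 statements merged into one kernel-verified Lean document; each statement's English description precedes it below -/
import Mathlib

section
/- Define f(x) = (1/(c+v)) e^{-μ x̄} Σ_{k=1}^∞ (μ^{kβ} x̄^{kβ−1}/Γ(kβ)) [P(kα, λx*) − P(kα+α, λx*)] with x̄ = (ct−x)/(c+v), x* = (vt+x)/(c+v). Then as x ↑ ct, f(x) → +∞ if 0 < β < 1; f(x) → (μ/(c+v))[P(α, λt) − P(2α, λt)] if β = 1; and f(x) → 0 if β > 1. -/
/-!
With the factor `x̄ ^ (β - 1)` taken out, the density is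
`(c + v)⁻¹ e^{-μ x̄} x̄ ^ (β - 1) G(x̄, λ x*)`, where `G` is a series in powers of `x̄ ^ β` whose
`k`-th term is at most `6 |μ| ^ β (|μ| x̄) ^ (k β)` in absolute value (since `1 / Γ ≤ 6` on
`(0, ∞)` and `0 ≤ P ≤ 1`). By dominated convergence `G` is continuous at `(0, λ t)`, where only its
constant term `μ ^ β / Γ(β) (P(α, λ t) - P(2α, λ t))` survives. That constant is positive because
`P(·, w)` is strictly decreasing: for `a < b` the function
`Γ(b) s ^ (a - 1) e^{-s} - Γ(a) s ^ (b - 1) e^{-s}` has integral zero over `(0, ∞)` and changes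
sign once, from positive to negative. The three regimes are then those of `x̄ ^ (β - 1)` as
`x̄ → 0⁺`.
-/

open Real Filter Topology

/-- Regularized lower incomplete gamma function `P(a,u)`. -/
noncomputable def regGamma (a u : ℝ) : ℝ :=
  (1 / Real.Gamma a) * ∫ s in (0 : ℝ)..u, s ^ (a - 1) * Real.exp (-s)

open MeasureTheory Set

lemma Real.inv_Gamma_le_six {a : ℝ} (ha : 0 < a) : (Gamma a)⁻¹ ≤ 6 := by
  have one_le_Gamma (b : ℝ) (hb : 2 ≤ b) : 1 ≤ Gamma b :=
    Gamma_two ▸ Gamma_strictMonoOn_Ici.monotoneOn (mem_Ici.2 le_rfl) (mem_Ici.2 hb) hb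
  rcases le_or_gt 2 a with h | h
  · exact (inv_le_one_of_one_le₀ (one_le_Gamma a h)).trans (by norm_num)
  · have hrec : Gamma (a + 2) = (a + 1) * a * Gamma a := by
      rw [show a + 2 = a + 1 + 1 by ring, Gamma_add_one (by positivity), Gamma_add_one ha.ne',
        mul_assoc]
    have := one_le_Gamma (a + 2) (by linarith)
    have hΓ := Gamma_pos_of_pos ha
    have h6 : (a + 1) * a < 6 := by nlinarith
    rw [inv_le_comm₀ hΓ (by norm_num)]
    nlinarith [mul_le_mul_of_nonneg_right h6.le hΓ.le]

lemma integrableOn_rpow_mul_exp_neg {a : ℝ} (ha : 0 < a) :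
    IntegrableOn (fun s : ℝ => s ^ (a - 1) * exp (-s)) (Ioi 0) :=
  (GammaIntegral_convergent ha).congr_fun (fun _ _ => mul_comm _ _) measurableSet_Ioi

lemma integral_Ioi_rpow_mul_exp_neg {a : ℝ} (ha : 0 < a) :
    ∫ s in Ioi 0, s ^ (a - 1) * exp (-s) = Gamma a := by
  rw [Gamma_eq_integral ha]
  exact setIntegral_congr_fun measurableSet_Ioi fun _ _ => mul_comm _ _

lemma regGamma_mem_Icc {a u : ℝ} (ha : 0 < a) (hu : 0 ≤ u) : regGamma a u ∈ Icc 0 1 := by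
  have hΓ := Gamma_pos_of_pos ha
  have hnonneg : ∀ s ∈ Ioi (0 : ℝ), 0 ≤ s ^ (a - 1) * exp (-s) := fun s hs =>
    mul_nonneg (rpow_nonneg (le_of_lt hs) _) (exp_pos _).le
  have hle : ∫ s in Ioc 0 u, s ^ (a - 1) * exp (-s) ≤ Gamma a :=
    integral_Ioi_rpow_mul_exp_neg ha ▸ setIntegral_mono_set (integrableOn_rpow_mul_exp_neg ha)
      (ae_restrict_of_forall_mem measurableSet_Ioi hnonneg) Ioc_subset_Ioi_self.eventuallyLE
  rw [regGamma, intervalIntegral.integral_of_le hu, one_div, ← div_eq_inv_mul]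
  exact ⟨div_nonneg (setIntegral_nonneg measurableSet_Ioc fun s hs => hnonneg s hs.1) hΓ.le,
    div_le_one_of_le₀ hle hΓ.le⟩

lemma continuous_regGamma {a : ℝ} (ha : 0 < a) : Continuous (regGamma a) :=
  continuous_const.mul <| intervalIntegral.continuous_primitive (fun _ _ =>
    (intervalIntegral.intervalIntegrable_rpow' (by linarith)).mul_continuousOn
      (continuous_exp.comp continuous_neg).continuousOn) 0

lemma setIntegral_Ioc_pos_of_sign_change {g : ℝ → ℝ} {w₀ w : ℝ} (hg : IntegrableOn g (Ioi 0))
    (hg_zero : ∫ s in Ioi 0, g s = 0) (hpos : ∀ s ∈ Ioo 0 w₀, 0 < g s)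
    (hneg : ∀ s, w₀ < s → g s < 0) (hw : 0 < w) :
    0 < ∫ s in Ioc 0 w, g s := by
  rcases le_or_gt w w₀ with hww | hww
  · rw [← intervalIntegral.integral_of_le hw.le]
    exact intervalIntegral.intervalIntegral_pos_of_pos_on
      ((intervalIntegrable_iff_integrableOn_Ioc_of_le hw.le).2 (hg.mono_set Ioc_subset_Ioi_self))
      (fun s hs => hpos s ⟨hs.1, hs.2.trans_le hww⟩) hw
  · have hsplit : ∫ s in Ioc 0 w, g s = -∫ s in Ioi w, g s := by
      rw [eq_neg_iff_add_eq_zero, ← setIntegral_union (Ioc_disjoint_Ioi le_rfl) measurableSet_Ioi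
          (hg.mono_set Ioc_subset_Ioi_self) (hg.mono_set (Ioi_subset_Ioi hw.le)),
        Ioc_union_Ioi_eq_Ioi hw.le, hg_zero]
    have hneg' : ∀ s ∈ Ioi w, 0 < -g s := fun s hs => neg_pos.2 (hneg s (hww.trans hs))
    have htail : 0 < ∫ s in Ioi w, -g s := by
      rw [setIntegral_pos_iff_support_of_nonneg_ae
        (ae_restrict_of_forall_mem measurableSet_Ioi fun s hs => (hneg' s hs).le)
        (hg.mono_set (Ioi_subset_Ioi hw.le)).neg]
      refine lt_of_lt_of_le ?_ (measure_mono fun s hs => ⟨(hneg' s hs).ne', hs⟩)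
      simp
    rwa [hsplit, neg_pos, ← neg_pos, ← integral_neg]

lemma regGamma_lt_regGamma {a b w : ℝ} (ha : 0 < a) (hab : a < b) (hw : 0 < w) :
    regGamma b w < regGamma a w := by
  have hb : 0 < b := ha.trans hab
  have hΓa := Gamma_pos_of_pos ha
  have hΓb := Gamma_pos_of_pos hb
  have hIa := integrableOn_rpow_mul_exp_neg ha
  have hIb := integrableOn_rpow_mul_exp_neg hb
  set g : ℝ → ℝ := fun s => Gamma b * (s ^ (a - 1) * exp (-s)) - Gamma a * (s ^ (b - 1) * exp (-s))
    with hg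
  have hg_zero : ∫ s in Ioi 0, g s = 0 := by
    rw [integral_sub (hIa.const_mul _) (hIb.const_mul _), integral_const_mul, integral_const_mul,
      integral_Ioi_rpow_mul_exp_neg ha, integral_Ioi_rpow_mul_exp_neg hb, mul_comm, sub_self]
  have hg_eq (s : ℝ) (hs : 0 < s) :
      g s = s ^ (a - 1) * exp (-s) * (Gamma b - Gamma a * s ^ (b - a)) := by
    simp only [hg]
    rw [show b - 1 = a - 1 + (b - a) by ring, rpow_add hs]; ring
  -- `g` changes sign where `s ^ (b - a) = Γ(b) / Γ(a)`
  set w₀ := (Gamma b / Gamma a) ^ (b - a)⁻¹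
  have hw₀ : 0 < w₀ := by positivity
  have hpos (s : ℝ) (hs : s ∈ Ioo 0 w₀) : 0 < g s := by
    have := (lt_rpow_inv_iff_of_pos hs.1.le (by positivity) (sub_pos.2 hab)).1 hs.2
    rw [lt_div_iff₀' hΓa] at this
    rw [hg_eq s hs.1]
    exact mul_pos (mul_pos (rpow_pos_of_pos hs.1 _) (exp_pos _)) (sub_pos.2 this)
  have hneg (s : ℝ) (hs : w₀ < s) : g s < 0 := by
    have := (rpow_inv_lt_iff_of_pos (by positivity) (hw₀.trans hs).le (sub_pos.2 hab)).1 hs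
    rw [div_lt_iff₀' hΓa] at this
    rw [hg_eq s (hw₀.trans hs)]
    exact mul_neg_of_pos_of_neg (mul_pos (rpow_pos_of_pos (hw₀.trans hs) _) (exp_pos _))
      (sub_neg.2 this)
  have key : 0 < ∫ s in Ioc 0 w, g s := setIntegral_Ioc_pos_of_sign_change
    ((hIa.const_mul _).sub (hIb.const_mul _)) hg_zero hpos hneg hw
  rw [hg, integral_sub ((hIa.mono_set Ioc_subset_Ioi_self).const_mul _)
    ((hIb.mono_set Ioc_subset_Ioi_self).const_mul _), integral_const_mul, integral_const_mul] at key
  rw [regGamma, regGamma, intervalIntegral.integral_of_le hw.le,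
    intervalIntegral.integral_of_le hw.le, one_div, one_div,
    ← div_eq_inv_mul, ← div_eq_inv_mul, div_lt_div_iff₀ hΓb hΓa]
  linarith

/-- The `k`-th term of the series in the forward density, with the factor `x̄ ^ (β - 1)` taken
out; `y` stands for `x̄` and `w` for `λ x*`. -/
noncomputable def forwardTerm (μ α β y w : ℝ) (k : ℕ) : ℝ :=
  μ ^ (((k : ℝ) + 1) * β) * y ^ ((k : ℝ) * β) / Gamma (((k : ℝ) + 1) * β) *
    (regGamma (((k : ℝ) + 1) * α) w - regGamma (((k : ℝ) + 1) * α + α) w)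

lemma abs_forwardTerm_le {μ α β y w : ℝ} (hα : 0 < α) (hβ : 0 < β) (hw : 0 ≤ w) (k : ℕ) :
    |forwardTerm μ α β y w k| ≤ 6 * |μ| ^ β * ((|μ| * |y|) ^ β) ^ k := by
  have hk : 0 < ((k : ℝ) + 1) * β := by positivity
  have hP := regGamma_mem_Icc (a := ((k : ℝ) + 1) * α) (by positivity) hw
  have hQ := regGamma_mem_Icc (a := ((k : ℝ) + 1) * α + α) (by positivity) hw
  have hdiff : |regGamma (((k : ℝ) + 1) * α) w - regGamma (((k : ℝ) + 1) * α + α) w| ≤ 1 :=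
    abs_sub_le_iff.2 ⟨by linarith [hP.2, hQ.1], by linarith [hP.1, hQ.2]⟩
  have hpow : |μ| ^ (((k : ℝ) + 1) * β) * |y| ^ ((k : ℝ) * β)
      = |μ| ^ β * ((|μ| * |y|) ^ β) ^ k := by
    rw [← rpow_natCast, ← rpow_mul (by positivity), mul_rpow (abs_nonneg _) (abs_nonneg _),
      add_one_mul, rpow_add' (abs_nonneg _) (add_one_mul (k : ℝ) β ▸ hk.ne'), mul_comm β]
    ring
  calc |forwardTerm μ α β y w k|
      = |μ ^ (((k : ℝ) + 1) * β)| * |y ^ ((k : ℝ) * β)| * (Gamma (((k : ℝ) + 1) * β))⁻¹ *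
          |regGamma (((k : ℝ) + 1) * α) w - regGamma (((k : ℝ) + 1) * α + α) w| := by
        rw [forwardTerm, abs_mul, abs_div, abs_mul, abs_of_pos (Gamma_pos_of_pos hk),
          div_eq_mul_inv]
    _ ≤ |μ| ^ (((k : ℝ) + 1) * β) * |y| ^ ((k : ℝ) * β) * 6 * 1 := by
        gcongr
        · exact abs_rpow_le_abs_rpow _ _
        · exact abs_rpow_le_abs_rpow _ _
        · exact inv_Gamma_le_six hk
    _ = 6 * |μ| ^ β * ((|μ| * |y|) ^ β) ^ k := by rw [mul_one, hpow]; ring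

lemma continuous_forwardTerm {μ α β : ℝ} (hα : 0 < α) (hβ : 0 ≤ β) (k : ℕ) :
    Continuous fun p : ℝ × ℝ => forwardTerm μ α β p.1 p.2 k :=
  ((continuous_const.mul ((continuous_rpow_const (by positivity)).comp continuous_fst)).div_const
    _).mul (((continuous_regGamma (by positivity)).comp continuous_snd).sub
      ((continuous_regGamma (by positivity)).comp continuous_snd))

lemma continuousAt_tsum_forwardTerm {μ α β w : ℝ} (hα : 0 < α) (hβ : 0 < β) (hw : 0 < w) :
    ContinuousAt (fun p : ℝ × ℝ => ∑' k, forwardTerm μ α β p.1 p.2 k) (0, w) := by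
  have hsmall : ∀ᶠ p : ℝ × ℝ in 𝓝 (0, w), (|μ| * |p.1|) ^ β < 1 / 2 ∧ 0 < p.2 := by
    have hcont : ContinuousAt (fun p : ℝ × ℝ => (|μ| * |p.1|) ^ β) (0, w) :=
      (continuous_const.mul continuous_fst.abs).continuousAt.rpow_const (Or.inr hβ.le)
    refine (hcont.eventually (gt_mem_nhds ?_)).and (continuousAt_snd.eventually (lt_mem_nhds hw))
    simp [zero_rpow hβ.ne']
  refine tendsto_tsum_of_dominated_convergence (bound := fun k => 6 * |μ| ^ β * (1 / 2) ^ k)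
    (summable_geometric_two.mul_left _)
    (fun k => (continuous_forwardTerm hα hβ.le k).continuousAt) ?_
  filter_upwards [hsmall] with p hp k
  rw [Real.norm_eq_abs]
  refine (abs_forwardTerm_le hα hβ hp.2.le k).trans ?_
  gcongr
  exact hp.1.le

lemma tsum_forwardTerm_zero_left {μ α β w : ℝ} (hβ : β ≠ 0) :
    ∑' k, forwardTerm μ α β 0 w k = μ ^ β / Gamma β * (regGamma α w - regGamma (2 * α) w) := by
  rw [tsum_eq_single 0 fun k hk => ?_]
  · simp [forwardTerm, two_mul]
  · simp [forwardTerm, zero_rpow (mul_ne_zero (Nat.cast_ne_zero.2 hk) hβ)]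

lemma tsum_eq_rpow_mul_tsum_forwardTerm {μ α β y w : ℝ} (hy : 0 < y) :
    ∑' k : ℕ, μ ^ (((k : ℝ) + 1) * β) * y ^ (((k : ℝ) + 1) * β - 1) /
        Gamma (((k : ℝ) + 1) * β) *
        (regGamma (((k : ℝ) + 1) * α) w - regGamma (((k : ℝ) + 1) * α + α) w) =
      y ^ (β - 1) * ∑' k, forwardTerm μ α β y w k := by
  rw [← tsum_mul_left]
  refine tsum_congr fun k => ?_
  rw [forwardTerm, show ((k : ℝ) + 1) * β - 1 = β - 1 + k * β by ring, rpow_add hy]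
  ring

lemma tendsto_sub_div_nhdsLT {a b : ℝ} (hb : 0 < b) :
    Tendsto (fun x => (a - x) / b) (𝓝[<] a) (𝓝[>] 0) := by
  refine tendsto_nhdsWithin_iff.2 ⟨?_, ?_⟩
  · simpa using ((by fun_prop : Continuous fun x => (a - x) / b).tendsto a).mono_left
      nhdsWithin_le_nhds
  · filter_upwards [self_mem_nhdsWithin] with x hx
    exact div_pos (sub_pos.2 hx) hb

lemma tendsto_exp_mul_tsum_forwardTerm {ι : Type*} {F : Filter ι} {μ α β w₀ : ℝ} {y w : ι → ℝ}
    (hα : 0 < α) (hβ : 0 < β) (hw₀ : 0 < w₀) (hy : Tendsto y F (𝓝 0))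
    (hw : Tendsto w F (𝓝 w₀)) :
    Tendsto (fun i => exp (-μ * y i) * ∑' k, forwardTerm μ α β (y i) (w i) k) F
      (𝓝 (μ ^ β / Gamma β * (regGamma α w₀ - regGamma (2 * α) w₀))) := by
  have hseries :=
    (continuousAt_tsum_forwardTerm (μ := μ) hα hβ hw₀).tendsto.comp (hy.prodMk_nhds hw)
  rw [tsum_forwardTerm_zero_left hβ.ne'] at hseries
  have hexp := (continuous_exp.tendsto (-μ * 0)).comp (hy.const_mul (-μ))
  rw [mul_zero, exp_zero] at hexp
  have := hexp.mul hseries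
  rwa [one_mul] at this

/-- behaviour of the forward density `f(x,t|c)` as `x ↑ ct`. -/
theorem forward_density_limit_at_ct (c v l μ α β t : ℝ)
    (hc : 0 < c) (hv : 0 < v) (hl : 0 < l) (hμ : 0 < μ)
    (hα : 0 < α) (hβ : 0 < β) (ht : 0 < t)
    (f : ℝ → ℝ)
    (hf : ∀ x, f x = (1 / (c + v)) * Real.exp (-μ * ((c * t - x) / (c + v))) *
      ∑' k : ℕ,
        μ ^ (((k : ℝ) + 1) * β) * ((c * t - x) / (c + v)) ^ (((k : ℝ) + 1) * β - 1) /
            Real.Gamma (((k : ℝ) + 1) * β) *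
          (regGamma (((k : ℝ) + 1) * α) (l * ((v * t + x) / (c + v))) -
            regGamma (((k : ℝ) + 1) * α + α) (l * ((v * t + x) / (c + v))))) :
    (β < 1 → Tendsto f (nhdsWithin (c * t) (Set.Ioo (-v * t) (c * t))) atTop) ∧
    (β = 1 → Tendsto f (nhdsWithin (c * t) (Set.Ioo (-v * t) (c * t)))
      (nhds ((μ / (c + v)) * (regGamma α (l * t) - regGamma (2 * α) (l * t))))) ∧
    (1 < β → Tendsto f (nhdsWithin (c * t) (Set.Ioo (-v * t) (c * t))) (nhds 0)) := by
  set F := 𝓝[Ioo (-v * t) (c * t)] (c * t)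
  set y : ℝ → ℝ := fun x => (c * t - x) / (c + v)
  set w : ℝ → ℝ := fun x => l * ((v * t + x) / (c + v))
  set A : ℝ → ℝ := fun x => 1 / (c + v) * (exp (-μ * y x) * ∑' k, forwardTerm μ α β (y x) (w x) k)
  set L := μ ^ β / Gamma β * (regGamma α (l * t) - regGamma (2 * α) (l * t))
  have hy : Tendsto y F (𝓝[>] 0) :=
    (tendsto_sub_div_nhdsLT (by linarith)).mono_left (nhdsWithin_mono _ Ioo_subset_Iio_self)
  have hw : Tendsto w F (𝓝 (l * t)) := by
    have hwct : w (c * t) = l * t := by simp only [w]; field_simp; ring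
    exact hwct ▸ ((by fun_prop : Continuous w).tendsto (c * t)).mono_left nhdsWithin_le_nhds
  have hA : Tendsto A F (𝓝 (1 / (c + v) * L)) :=
    (tendsto_exp_mul_tsum_forwardTerm hα hβ (by positivity) (hy.mono_right nhdsWithin_le_nhds)
      hw).const_mul _
  have hf_eq : f =ᶠ[F] fun x => A x * y x ^ (β - 1) := by
    filter_upwards [hy self_mem_nhdsWithin] with x hx
    rw [hf, tsum_eq_rpow_mul_tsum_forwardTerm hx]
    ring
  refine ⟨fun hβ1 => ?_, fun hβ1 => ?_, fun hβ1 => ?_⟩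
  · have hL : 0 < L := mul_pos (by have := Gamma_pos_of_pos hβ; positivity)
      (sub_pos.2 (regGamma_lt_regGamma hα (by linarith) (by positivity)))
    exact (hA.pos_mul_atTop (mul_pos (by positivity) hL)
      ((tendsto_rpow_neg_nhdsGT_zero (by linarith)).comp hy)).congr' hf_eq.symm
  · subst hβ1
    rw [show μ / (c + v) = 1 / (c + v) * (μ ^ (1 : ℝ) / Gamma 1) by rw [rpow_one, Gamma_one]; ring,
      mul_assoc]
    exact hA.congr' (hf_eq.mono fun x hx => by simp only [hx, sub_self, rpow_zero, mul_one])
  · have hpow := (continuousAt_rpow_const 0 (β - 1) (Or.inr (by linarith))).tendsto.comp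
      (hy.mono_right nhdsWithin_le_nhds)
    rw [zero_rpow (by linarith)] at hpow
    simpa only [mul_zero] using (hA.mul hpow).congr' hf_eq.symm
end

section
/- Define b(x) as in the gamma-alternating motion backward density, i.e. b(x) = (1/(c+v)){ (λ^α e^{-λx*} (x*)^{α−1}/Γ(α))·(Γ(β, μx̄)/Γ(β)) + e^{-λx*} Σ_{k=1}^∞ (λ^{(k+1)α}(x*)^{(k+1)α−1}/Γ((k+1)α))[P(kβ, μx̄) − P(kβ+β, μx̄)] } with x̄ = (ct−x)/(c+v), x* = (vt+x)/(c+v). Then as x ↓ −vt: b(x) → +∞ if 0 < α < 1; b(x) → λ Γ(β, μt)/((c+v) Γ(α) Γ(β)) if α = 1; b(x) → 0 if α > 1. -/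
open Real Filter Topology

/-- Upper incomplete gamma function `Γ(a,u)`. -/
noncomputable def upperGamma (a u : ℝ) : ℝ :=
  ∫ s in Set.Ioi u, s ^ (a - 1) * Real.exp (-s)

/-!
Put `y = x* ↓ 0`, so that `x̄ = t - y`. Then `(c + v) b(x) = y^(α-1) G(y)` with
`G(y) = e^(-λy) (λ^α Γ(β, μ(t - y)) / (Γ(α) Γ(β)) + y^(1-α) S(y))`, `S` the series.
After multiplication by `y^(1-α)`, the `k`-th term of `S` is `λ^α r^(k+1) / Γ((k+2)α)`,
`r = (λy)^α`, times a difference of two values of `P` in `[0, 1]`; as `Γ` has a positive minimum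
on `(0, ∞)`, this is dominated by a geometric series `O(r)`. Hence, by continuity of `Γ(β, ·)`,
`G(y) → λ^α Γ(β, μt) / (Γ(α) Γ(β)) > 0`, and `b` behaves like `y^(α-1)`.
-/

open MeasureTheory Set

section IncompleteGamma

variable {a u : ℝ}

lemma integrableOn_rpow_sub_one_mul_exp_neg (ha : 0 < a) :
    IntegrableOn (fun s : ℝ => s ^ (a - 1) * exp (-s)) (Ioi 0) :=
  (Real.GammaIntegral_convergent ha).congr_fun (fun _ _ => mul_comm _ _) measurableSet_Ioi

lemma Gamma_eq_integral_rpow_sub_one_mul_exp_neg (ha : 0 < a) :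
    Gamma a = ∫ s in Ioi (0 : ℝ), s ^ (a - 1) * exp (-s) := by
  rw [Real.Gamma_eq_integral ha]
  exact setIntegral_congr_fun measurableSet_Ioi fun _ _ => mul_comm _ _

lemma intervalIntegral_add_upperGamma (ha : 0 < a) (hu : 0 ≤ u) :
    (∫ s in (0 : ℝ)..u, s ^ (a - 1) * exp (-s)) + upperGamma a u = Gamma a := by
  have hf := integrableOn_rpow_sub_one_mul_exp_neg ha
  rw [intervalIntegral.integral_of_le hu, upperGamma,
    ← setIntegral_union Ioc_disjoint_Ioi_same measurableSet_Ioi (hf.mono_set Ioc_subset_Ioi_self)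
      (hf.mono_set (Ioi_subset_Ioi hu)),
    Ioc_union_Ioi_eq_Ioi hu, Gamma_eq_integral_rpow_sub_one_mul_exp_neg ha]

lemma regGamma_eq_one_sub (ha : 0 < a) (hu : 0 ≤ u) :
    regGamma a u = 1 - upperGamma a u / Gamma a := by
  have hΓ := (Gamma_pos_of_pos ha).ne'
  rw [regGamma, ← intervalIntegral_add_upperGamma ha hu] at *
  field_simp
  ring

lemma upperGamma_nonneg (hu : 0 ≤ u) : 0 ≤ upperGamma a u :=
  setIntegral_nonneg measurableSet_Ioi fun _ hs =>
    mul_nonneg (rpow_nonneg (hu.trans (le_of_lt hs)) _) (exp_pos _).le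

lemma upperGamma_pos (ha : 0 < a) (hu : 0 ≤ u) : 0 < upperGamma a u := by
  have hf := (integrableOn_rpow_sub_one_mul_exp_neg ha).mono_set (Ioi_subset_Ioi hu)
  rw [upperGamma, setIntegral_pos_iff_support_of_nonneg_ae _ hf]
  · have hsupp : (Function.support fun s : ℝ => s ^ (a - 1) * exp (-s)) ∩ Ioi u = Ioi u :=
      inter_eq_right.2 fun s hs =>
        mul_ne_zero (rpow_pos_of_pos (hu.trans_lt hs) _).ne' (exp_pos _).ne'
    rw [hsupp]
    simp
  · filter_upwards [self_mem_ae_restrict measurableSet_Ioi] with s hs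
    exact mul_nonneg (rpow_nonneg (hu.trans (le_of_lt hs)) _) (exp_pos _).le

lemma regGamma_nonneg (ha : 0 < a) (hu : 0 ≤ u) : 0 ≤ regGamma a u := by
  rw [regGamma, intervalIntegral.integral_of_le hu]
  exact mul_nonneg (one_div_pos.2 (Gamma_pos_of_pos ha)).le <|
    setIntegral_nonneg measurableSet_Ioc fun s hs =>
      mul_nonneg (rpow_nonneg hs.1.le _) (exp_pos _).le

lemma regGamma_le_one (ha : 0 < a) (hu : 0 ≤ u) : regGamma a u ≤ 1 := by
  rw [regGamma_eq_one_sub ha hu, sub_le_self_iff]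
  exact div_nonneg (upperGamma_nonneg hu) (Gamma_pos_of_pos ha).le

lemma abs_regGamma_sub_regGamma_le_one {b : ℝ} (ha : 0 < a) (hb : 0 < b) (hu : 0 ≤ u) :
    |regGamma a u - regGamma b u| ≤ 1 :=
  abs_sub_le_of_nonneg_of_le (regGamma_nonneg ha hu) (regGamma_le_one ha hu)
    (regGamma_nonneg hb hu) (regGamma_le_one hb hu)

lemma continuousAt_upperGamma (ha : 0 < a) (hu : 0 < u) : ContinuousAt (upperGamma a) u := by
  have hprim : ContinuousAt (fun w => ∫ s in (0 : ℝ)..w, s ^ (a - 1) * exp (-s)) u := by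
    have hint : IntegrableOn (fun s : ℝ => s ^ (a - 1) * exp (-s)) (uIcc 0 (2 * u)) := by
      rw [uIcc_of_le (by positivity), integrableOn_Icc_iff_integrableOn_Ioc]
      exact (integrableOn_rpow_sub_one_mul_exp_neg ha).mono_set Ioc_subset_Ioi_self
    refine (intervalIntegral.continuousOn_primitive_interval hint).continuousAt ?_
    rw [uIcc_of_le (by positivity)]
    exact Icc_mem_nhds hu (by linarith)
  refine ((continuousAt_const (y := Gamma a)).sub hprim).congr ?_
  filter_upwards [lt_mem_nhds hu] with w hw
  show Gamma a - _ = _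
  linarith [intervalIntegral_add_upperGamma ha hw.le]

end IncompleteGamma

lemma exists_pos_forall_le_Gamma : ∃ m > 0, ∀ a, 0 < a → m ≤ Gamma a := by
  obtain ⟨x, hx, hmin⟩ := Real.exists_isMinOn_Gamma_Ioi
  exact ⟨Gamma x, Gamma_pos_of_pos (by linarith [hx.1]), fun a ha => hmin (mem_Ioi.2 ha)⟩

/-- The series in `b`, with `u` standing for `μ x̄`. -/
noncomputable def backwardSeries (l α β y u : ℝ) : ℝ :=
  ∑' k : ℕ, l ^ ((((k : ℝ) + 1) + 1) * α) * y ^ ((((k : ℝ) + 1) + 1) * α - 1) /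
      Gamma ((((k : ℝ) + 1) + 1) * α) *
    (regGamma (((k : ℝ) + 1) * β) u - regGamma (((k : ℝ) + 1) * β + β) u)

lemma tendsto_rpow_nhds_zero {p : ℝ} (hp : 0 < p) :
    Tendsto (fun y : ℝ => y ^ p) (𝓝 0) (𝓝 0) := by
  simpa [zero_rpow hp.ne'] using (continuousAt_rpow_const 0 p (Or.inr hp.le)).tendsto

section BackwardSeries

variable {l α β y : ℝ}

lemma rpow_one_sub_mul_series_coeff (hl : 0 < l) (hy : 0 < y) (k : ℕ) :
    y ^ (1 - α) * (l ^ ((((k : ℝ) + 1) + 1) * α) * y ^ ((((k : ℝ) + 1) + 1) * α - 1)) =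
      l ^ α * ((l * y) ^ α) ^ (k + 1) := by
  have hl' : l ^ ((((k : ℝ) + 1) + 1) * α) = l ^ α * l ^ (α * (k + 1 : ℕ)) := by
    rw [← rpow_add hl]; congr 1; push_cast; ring
  have hy' : y ^ (1 - α) * y ^ ((((k : ℝ) + 1) + 1) * α - 1) = y ^ (α * (k + 1 : ℕ)) := by
    rw [← rpow_add hy]; congr 1; push_cast; ring
  rw [← rpow_natCast, ← rpow_mul (by positivity), mul_rpow hl.le hy.le, hl', ← hy']
  ring

lemma abs_rpow_one_sub_mul_backwardSeries_le {m u : ℝ} (hl : 0 < l) (hα : 0 < α) (hβ : 0 < β)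
    (hy : 0 < y) (hu : 0 ≤ u) (hm : 0 < m) (hmΓ : ∀ a, 0 < a → m ≤ Gamma a)
    (hr : (l * y) ^ α < 1) :
    |y ^ (1 - α) * backwardSeries l α β y u| ≤
      l ^ α / m * (l * y) ^ α * (1 - (l * y) ^ α)⁻¹ := by
  set r := (l * y) ^ α
  have hr0 : 0 ≤ r := by positivity
  rw [backwardSeries, ← tsum_mul_left, ← Real.norm_eq_abs]
  refine tsum_of_norm_bounded ((hasSum_geometric_of_lt_one hr0 hr).mul_left _) fun k => ?_
  have hΓ : 0 < Gamma ((((k : ℝ) + 1) + 1) * α) := by positivity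
  have hP := abs_regGamma_sub_regGamma_le_one (a := ((k : ℝ) + 1) * β)
    (b := ((k : ℝ) + 1) * β + β) (by positivity) (by positivity) hu
  calc ‖y ^ (1 - α) * (l ^ ((((k : ℝ) + 1) + 1) * α) * y ^ ((((k : ℝ) + 1) + 1) * α - 1) /
          Gamma ((((k : ℝ) + 1) + 1) * α) *
        (regGamma (((k : ℝ) + 1) * β) u - regGamma (((k : ℝ) + 1) * β + β) u))‖
      = l ^ α * r ^ (k + 1) / Gamma ((((k : ℝ) + 1) + 1) * α) *
        |regGamma (((k : ℝ) + 1) * β) u - regGamma (((k : ℝ) + 1) * β + β) u| := by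
        rw [← rpow_one_sub_mul_series_coeff hl hy k, Real.norm_eq_abs, abs_mul, abs_mul,
          abs_div, abs_of_pos hΓ, abs_of_nonneg (by positivity),
          abs_of_nonneg (by positivity)]
        ring
    _ ≤ l ^ α * r ^ (k + 1) / m * 1 := by gcongr; exact hmΓ _ (by positivity)
    _ = l ^ α / m * r * r ^ k := by ring

lemma tendsto_rpow_one_sub_mul_backwardSeries {u : ℝ → ℝ} (hl : 0 < l) (hα : 0 < α)
    (hβ : 0 < β) (hu : ∀ᶠ y in 𝓝[>] 0, 0 ≤ u y) :
    Tendsto (fun y => y ^ (1 - α) * backwardSeries l α β y (u y)) (𝓝[>] 0) (𝓝 0) := by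
  obtain ⟨m, hm, hmΓ⟩ := exists_pos_forall_le_Gamma
  have hr : Tendsto (fun y : ℝ => (l * y) ^ α) (𝓝[>] 0) (𝓝 0) :=
    ((tendsto_rpow_nhds_zero hα).comp ((continuous_const_mul l).tendsto' 0 0 (mul_zero l)))
      |>.mono_left nhdsWithin_le_nhds
  have hbound : Tendsto (fun y : ℝ => l ^ α / m * (l * y) ^ α * (1 - (l * y) ^ α)⁻¹)
      (𝓝[>] 0) (𝓝 0) := by
    simpa using (hr.const_mul (l ^ α / m)).mul ((tendsto_const_nhds.sub hr).inv₀ (by simp))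
  refine squeeze_zero_norm' ?_ hbound
  filter_upwards [hu, self_mem_nhdsWithin, hr.eventually (gt_mem_nhds one_pos)]
    with y hy0 hy hy1
  exact abs_rpow_one_sub_mul_backwardSeries_le hl hα hβ hy hy0 hm hmΓ hy1

end BackwardSeries

lemma tendsto_add_div_nhdsGT_zero {a p : ℝ} (hp : 0 < p) :
    Tendsto (fun x => (a + x) / p) (𝓝[>] (-a)) (𝓝[>] 0) := by
  refine tendsto_nhdsWithin_iff.2 ⟨?_, ?_⟩
  · exact (((continuous_const.add continuous_id).div_const _).tendsto' _ _
      (by simp)).mono_left nhdsWithin_le_nhds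
  · filter_upwards [self_mem_nhdsWithin] with x hx
    exact div_pos (neg_lt_iff_pos_add'.1 hx) hp

section BackwardCofactor

variable {l α β μ t : ℝ}

noncomputable def backwardCofactor (l α β μ t y : ℝ) : ℝ :=
  exp (-l * y) * (l ^ α / Gamma α * (upperGamma β (μ * (t - y)) / Gamma β) +
    y ^ (1 - α) * backwardSeries l α β y (μ * (t - y)))

lemma backward_density_eq_rpow_mul_backwardCofactor {y : ℝ} (hy : 0 < y) :
    l ^ α * exp (-l * y) * y ^ (α - 1) / Gamma α * (upperGamma β (μ * (t - y)) / Gamma β) +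
        exp (-l * y) * backwardSeries l α β y (μ * (t - y)) =
      y ^ (α - 1) * backwardCofactor l α β μ t y := by
  have h : y ^ (α - 1) * y ^ (1 - α) = 1 := by rw [← rpow_add hy]; simp
  rw [backwardCofactor]
  linear_combination (-exp (-l * y) * backwardSeries l α β y (μ * (t - y))) * h

lemma tendsto_backwardCofactor (hl : 0 < l) (hα : 0 < α) (hβ : 0 < β) (hμ : 0 < μ)
    (ht : 0 < t) :
    Tendsto (backwardCofactor l α β μ t) (𝓝[>] 0)
      (𝓝 (l ^ α / Gamma α * (upperGamma β (μ * t) / Gamma β))) := by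
  have hu : Tendsto (fun y : ℝ => μ * (t - y)) (𝓝[>] 0) (𝓝 (μ * t)) :=
    ((continuous_const.mul (continuous_const.sub continuous_id)).tendsto' 0 _
      (by simp)).mono_left nhdsWithin_le_nhds
  have hexp : Tendsto (fun y : ℝ => exp (-l * y)) (𝓝[>] 0) (𝓝 1) :=
    ((continuous_exp.comp (continuous_const.mul continuous_id)).tendsto' 0 _
      (by simp)).mono_left nhdsWithin_le_nhds
  have hU := (continuousAt_upperGamma hβ (mul_pos hμ ht)).tendsto.comp hu
  have hS := tendsto_rpow_one_sub_mul_backwardSeries (u := fun y => μ * (t - y)) hl hα hβ <| by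
    filter_upwards [Ioo_mem_nhdsGT ht] with y hy
    exact mul_nonneg hμ.le (sub_nonneg.2 hy.2.le)
  have h := hexp.mul (((hU.div_const (Gamma β)).const_mul (l ^ α / Gamma α)).add hS)
  rwa [one_mul, add_zero] at h

end BackwardCofactor

/-- behaviour of the backward density `b(x,t|c)` as `x ↓ -vt`. -/
theorem backward_density_limit_at_neg_vt (c v l μ α β t : ℝ)
    (hc : 0 < c) (hv : 0 < v) (hl : 0 < l) (hμ : 0 < μ)
    (hα : 0 < α) (hβ : 0 < β) (ht : 0 < t)
    (b : ℝ → ℝ)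
    (hb : ∀ x, b x = (1 / (c + v)) *
      (l ^ α * Real.exp (-l * ((v * t + x) / (c + v))) *
          ((v * t + x) / (c + v)) ^ (α - 1) / Real.Gamma α *
          (upperGamma β (μ * ((c * t - x) / (c + v))) / Real.Gamma β) +
        Real.exp (-l * ((v * t + x) / (c + v))) *
          ∑' k : ℕ,
            l ^ ((((k : ℝ) + 1) + 1) * α) *
                ((v * t + x) / (c + v)) ^ ((((k : ℝ) + 1) + 1) * α - 1) /
                Real.Gamma ((((k : ℝ) + 1) + 1) * α) *
              (regGamma (((k : ℝ) + 1) * β) (μ * ((c * t - x) / (c + v))) -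
                regGamma (((k : ℝ) + 1) * β + β) (μ * ((c * t - x) / (c + v)))))) :
    (α < 1 → Tendsto b (nhdsWithin (-v * t) (Set.Ioo (-v * t) (c * t))) atTop) ∧
    (α = 1 → Tendsto b (nhdsWithin (-v * t) (Set.Ioo (-v * t) (c * t)))
      (nhds (l * upperGamma β (μ * t) / ((c + v) * Real.Gamma α * Real.Gamma β)))) ∧
    (1 < α → Tendsto b (nhdsWithin (-v * t) (Set.Ioo (-v * t) (c * t))) (nhds 0)) := by
  have hcv : 0 < c + v := by linarith
  set xStar : ℝ → ℝ := fun x => (v * t + x) / (c + v)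
  set G := backwardCofactor l α β μ t
  have hxStar : Tendsto xStar (𝓝[Ioo (-v * t) (c * t)] (-v * t)) (𝓝[>] 0) :=
    (tendsto_add_div_nhdsGT_zero hcv).mono_left <| by
      rw [neg_mul]; exact nhdsWithin_mono _ Ioo_subset_Ioi_self
  have hb' : (fun x => (c + v)⁻¹ * (xStar x ^ (α - 1) * G (xStar x)))
      =ᶠ[𝓝[Ioo (-v * t) (c * t)] (-v * t)] b := by
    filter_upwards [self_mem_nhdsWithin] with x hx
    have hxbar : (c * t - x) / (c + v) = t - xStar x := by simp only [xStar]; field_simp; ring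
    rw [hb x, hxbar, one_div]
    exact congrArg _ (backward_density_eq_rpow_mul_backwardCofactor
      (div_pos (by linarith [hx.1]) hcv)).symm
  have hG := tendsto_backwardCofactor hl hα hβ hμ ht
  refine ⟨fun hα1 => ?_, fun hα1 => ?_, fun hα1 => ?_⟩
  · have hA : 0 < l ^ α / Gamma α * (upperGamma β (μ * t) / Gamma β) := by
      have := upperGamma_pos hβ (mul_pos hμ ht).le
      positivity
    have hpow := tendsto_rpow_neg_nhdsGT_zero (sub_neg.2 hα1)
    exact (((hpow.atTop_mul_pos hA hG).const_mul_atTop (inv_pos.2 hcv)).comp hxStar).congr' hb'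
  · subst hα1
    have hG1 : Tendsto (fun y : ℝ => y ^ ((1 : ℝ) - 1) * G y) (𝓝[>] 0)
        (𝓝 (l ^ (1 : ℝ) / Gamma 1 * (upperGamma β (μ * t) / Gamma β))) := by
      simpa using hG
    convert ((hG1.const_mul (c + v)⁻¹).comp hxStar).congr' hb' using 2
    rw [rpow_one, Gamma_one]
    field_simp
  · have hpow := (tendsto_rpow_nhds_zero (sub_pos.2 hα1)).mono_left
      (nhdsWithin_le_nhds (s := Ioi 0))
    simpa using (((hpow.mul hG).const_mul (c + v)⁻¹).comp hxStar).congr' hb'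
end

section
/- Let N be a Poisson process with rate λ and let T_n denote its arrival times. If N'_t counts the renewals of a process whose inter-renewal times are Erlang(λ, n) (sums of n exponentials), then E[(−1)^{N'_s}] = 1 − 2 e^{-λs} Σ_{k=0}^∞ Σ_{j=2nk+n}^{2nk+2n−1} (λs)^j / j!. -/
open MeasureTheory ProbabilityTheory Real

/-- The `m`-th renewal time `T_m = X_1 + ... + X_m`. -/
noncomputable def renewalTime {Ω : Type*} (X : ℕ → Ω → ℝ) (m : ℕ) (ω : Ω) : ℝ :=
  ∑ i ∈ Finset.range m, X i ω

/-- The renewal counting process `N'_t = Σ_{m ≥ 1} 1_{T'_m ≤ t}`. -/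
noncomputable def renewalCount {Ω : Type*} (X : ℕ → Ω → ℝ) (t : ℝ) (ω : Ω) : ℕ :=
  Set.ncard {m : ℕ | renewalTime X (m + 1) ω ≤ t}

open Finset
open scoped Nat

/-!
The `m`-th renewal time `T_m` has the Erlang(λ, n m) law, that is
`P(T_m ≤ t) = P(Poisson(λt) ≥ n m) = 1 - e^(-λt) Σ_{j < n m} (λt)^j / j!`. This is proved by
induction on `m`, convolving with the Erlang(λ, n) density; the integrals that occur are Beta
integrals `∫₀ᵗ x^a (t - x)^b dx = a! b! t^(a+b+1) / (a+b+1)!`. Almost surely the inter-renewal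
times are nonnegative and `T_m → ∞` (because `P(T_m ≤ s) → 0`), so `N'_s = k` exactly on
`{T_k ≤ s < T_(k+1)}`, an event of probability `e^(-λs) Σ_{nk ≤ j < nk+n} (λs)^j / j!`.
Finally `E[(-1)^N'_s] = 1 - 2 P(N'_s odd)`.
-/

lemma integral_pow_mul_sub_pow (a b : ℕ) (t : ℝ) :
    ∫ x in (0 : ℝ)..t, x ^ a * (t - x) ^ b = a ! * b ! / (a + b + 1)! * t ^ (a + b + 1) := by
  induction b generalizing a with
  | zero =>
    simp only [pow_zero, mul_one, integral_pow, Nat.factorial_zero, add_zero, Nat.factorial_succ]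
    push_cast
    field_simp
    simp
  | succ b ih =>
    have hsplit : ∀ x : ℝ, x ^ a * (t - x) ^ (b + 1) =
        t * (x ^ a * (t - x) ^ b) - x ^ (a + 1) * (t - x) ^ b := fun x => by ring
    have hint : ∀ c, IntervalIntegrable (fun x : ℝ => x ^ c * (t - x) ^ b) volume 0 t :=
      fun c => by apply Continuous.intervalIntegrable; fun_prop
    simp only [hsplit]
    rw [intervalIntegral.integral_sub ((hint a).const_mul t) (hint (a + 1)),
      intervalIntegral.integral_const_mul, ih, ih, show a + 1 + b + 1 = a + b + 1 + 1 by ring,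
      show a + (b + 1) + 1 = a + b + 1 + 1 by ring]
    simp only [Nat.factorial_succ (a + b + 1), Nat.factorial_succ a, Nat.factorial_succ b]
    push_cast
    field_simp
    ring

noncomputable def poissonWeight (r : ℝ) (j : ℕ) : ℝ := exp (-r) * r ^ j / j !

lemma poissonWeight_nonneg {r : ℝ} (hr : 0 ≤ r) (j : ℕ) : 0 ≤ poissonWeight r j := by
  unfold poissonWeight; positivity

lemma hasSum_poissonWeight (r : ℝ) : HasSum (poissonWeight r) 1 := by
  have h := (NormedSpace.expSeries_div_hasSum_exp r).mul_left (exp (-r))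
  rw [← exp_eq_exp_ℝ, ← exp_add, neg_add_cancel, exp_zero] at h
  have hpw : poissonWeight r = fun j => exp (-r) * (r ^ j / j !) := by
    funext j; rw [poissonWeight, mul_div_assoc]
  rwa [hpw]

lemma hasDerivAt_exp_neg_mul (l t : ℝ) :
    HasDerivAt (fun u => exp (-(l * u))) (-(l * exp (-(l * t)))) t :=
  ((hasDerivAt_id' t).const_mul l).fun_neg.exp.congr_deriv (by ring)

lemma hasDerivAt_poissonWeight_succ (l t : ℝ) (j : ℕ) :
    HasDerivAt (fun u => poissonWeight (l * u) (j + 1))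
      (l * (poissonWeight (l * t) j - poissonWeight (l * t) (j + 1))) t := by
  have hpow : HasDerivAt (fun u => (l * u) ^ (j + 1)) ((j + 1) * (l * t) ^ j * l) t :=
    (((hasDerivAt_id' t).const_mul l).fun_pow (j + 1)).congr_deriv (by simp)
  refine (((hasDerivAt_exp_neg_mul l t).fun_mul hpow).div_const ((j + 1)! : ℝ)).congr_deriv ?_
  simp only [poissonWeight, Nat.factorial_succ, Nat.cast_mul]
  field_simp
  push_cast
  ring

lemma hasDerivAt_sum_range_poissonWeight (l t : ℝ) (k : ℕ) :
    HasDerivAt (fun u => ∑ j ∈ range (k + 1), poissonWeight (l * u) j)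
      (-(l * poissonWeight (l * t) k)) t := by
  induction k with
  | zero => simpa [poissonWeight] using hasDerivAt_exp_neg_mul l t
  | succ k ih =>
    simp only [sum_range_succ _ (k + 1)]
    exact (ih.fun_add (hasDerivAt_poissonWeight_succ l t k)).congr_deriv (by ring)

lemma integral_mul_poissonWeight (l t : ℝ) (m : ℕ) :
    ∫ x in (0 : ℝ)..t, l * poissonWeight (l * x) m =
      1 - ∑ j ∈ range (m + 1), poissonWeight (l * t) j := by
  rw [← neg_neg (∫ x in (0 : ℝ)..t, _), ← intervalIntegral.integral_neg,
    intervalIntegral.integral_eq_sub_of_hasDerivAt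
      (fun x _ => hasDerivAt_sum_range_poissonWeight l x m)
      (by apply Continuous.intervalIntegrable; unfold poissonWeight; fun_prop)]
  simp [poissonWeight, sum_range_succ']

lemma integral_poissonWeight_sub_mul_poissonWeight (l t : ℝ) (j m : ℕ) :
    ∫ x in (0 : ℝ)..t, poissonWeight (l * (t - x)) j * (l * poissonWeight (l * x) m) =
      poissonWeight (l * t) (j + m + 1) := by
  have hpt : ∀ x, poissonWeight (l * (t - x)) j * (l * poissonWeight (l * x) m) =
      exp (-(l * t)) * l ^ (j + m + 1) / (j ! * m !) * (x ^ m * (t - x) ^ j) := fun x => by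
    have hexp : exp (-(l * (t - x))) * exp (-(l * x)) = exp (-(l * t)) := by
      rw [← exp_add]; ring_nf
    simp only [poissonWeight, mul_pow, ← hexp]
    field_simp
    ring
  simp only [hpt, intervalIntegral.integral_const_mul, integral_pow_mul_sub_pow]
  rw [show m + j + 1 = j + m + 1 by ring, poissonWeight]
  field_simp
  ring

lemma integral_one_sub_sum_poissonWeight_mul (l t : ℝ) (k m : ℕ) :
    ∫ x in (0 : ℝ)..t,
        (1 - ∑ j ∈ range k, poissonWeight (l * (t - x)) j) * (l * poissonWeight (l * x) m) =
      1 - ∑ j ∈ range (m + 1 + k), poissonWeight (l * t) j := by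
  simp only [sub_mul, one_mul, sum_mul]
  rw [intervalIntegral.integral_sub, intervalIntegral.integral_finsetSum,
    integral_mul_poissonWeight, sum_range_add _ (m + 1) k]
  · have hidx : ∀ j, j + m + 1 = m + 1 + j := fun j => by ring
    simp only [integral_poissonWeight_sub_mul_poissonWeight, hidx]
    ring
  all_goals intros; apply Continuous.intervalIntegrable; unfold poissonWeight; fun_prop

lemma sum_range_poissonWeight_le_one {r : ℝ} (hr : 0 ≤ r) (k : ℕ) :
    ∑ j ∈ range k, poissonWeight r j ≤ 1 :=
  sum_le_hasSum _ (fun j _ => poissonWeight_nonneg hr j) (hasSum_poissonWeight r)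

/-- `P(Poisson(l t) ≥ k)`, the distribution function of the Erlang(l, k) law. -/
noncomputable def erlangCDF (l : ℝ) (k : ℕ) (t : ℝ) : ℝ :=
  if 0 ≤ t then 1 - ∑ j ∈ range k, poissonWeight (l * t) j else 0

lemma erlangCDF_nonneg {l : ℝ} (hl : 0 ≤ l) (k : ℕ) (t : ℝ) : 0 ≤ erlangCDF l k t := by
  unfold erlangCDF
  split_ifs with ht
  · linarith [sum_range_poissonWeight_le_one (mul_nonneg hl ht) k]
  · rfl

lemma erlangCDF_le_one {l : ℝ} (hl : 0 ≤ l) (k : ℕ) (t : ℝ) : erlangCDF l k t ≤ 1 := by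
  unfold erlangCDF
  split_ifs with ht
  · linarith [sum_nonneg fun j (_ : j ∈ range k) => poissonWeight_nonneg (mul_nonneg hl ht) j]
  · exact zero_le_one

lemma measurable_erlangCDF (l : ℝ) (k : ℕ) : Measurable (erlangCDF l k) :=
  Measurable.ite measurableSet_Ici (by unfold poissonWeight; fun_prop) measurable_const

lemma erlangCDF_sub_erlangCDF (l : ℝ) {a b : ℕ} (hab : a ≤ b) {t : ℝ} (ht : 0 ≤ t) :
    erlangCDF l a t - erlangCDF l b t = ∑ j ∈ Ico a b, poissonWeight (l * t) j := by
  simp only [erlangCDF, if_pos ht, sum_Ico_eq_sub _ hab]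
  ring

lemma tendsto_erlangCDF_atTop (l t : ℝ) :
    Filter.Tendsto (fun k => erlangCDF l k t) Filter.atTop (nhds 0) := by
  unfold erlangCDF
  split_ifs
  · simpa using ((hasSum_poissonWeight (l * t)).tendsto_sum_nat).const_sub 1
  · exact tendsto_const_nhds

lemma gammaPDFReal_natCast_succ (l : ℝ) (m : ℕ) {x : ℝ} (hx : 0 ≤ x) :
    gammaPDFReal (m + 1 : ℕ) l x = l * poissonWeight (l * x) m := by
  rw [gammaPDFReal, if_pos hx, poissonWeight, Nat.cast_add_one, Gamma_nat_eq_factorial,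
    add_sub_cancel_right, rpow_natCast, ← Nat.cast_add_one, rpow_natCast]
  ring

lemma integrable_gammaPDFReal {a r : ℝ} (ha : 0 < a) (hr : 0 < r) :
    Integrable (gammaPDFReal a r) := by
  refine ⟨(measurable_gammaPDFReal a r).aestronglyMeasurable, ?_⟩
  rw [hasFiniteIntegral_iff_ofReal (ae_of_all _ (gammaPDFReal_nonneg ha hr))]
  exact (lintegral_gammaPDF_eq_one ha hr).trans_lt ENNReal.one_lt_top

lemma integral_erlangCDF_sub_mul_gammaPDFReal (l : ℝ) (k m : ℕ) (t : ℝ) :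
    ∫ x, erlangCDF l k (t - x) * gammaPDFReal (m + 1 : ℕ) l x =
      erlangCDF l (m + 1 + k) t := by
  have hind : (fun x => erlangCDF l k (t - x) * gammaPDFReal (m + 1 : ℕ) l x) =
      (Set.Icc 0 t).indicator fun x =>
        (1 - ∑ j ∈ range k, poissonWeight (l * (t - x)) j) * (l * poissonWeight (l * x) m) := by
    funext x
    by_cases hx : x ∈ Set.Icc 0 t
    · rw [Set.indicator_of_mem hx, erlangCDF, if_pos (sub_nonneg.2 hx.2),
        gammaPDFReal_natCast_succ l m hx.1]
    · rw [Set.indicator_of_notMem hx]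
      rcases not_and_or.1 hx with hx | hx
      · rw [gammaPDFReal, if_neg hx, mul_zero]
      · rw [erlangCDF, if_neg (by linarith [not_le.1 hx]), zero_mul]
  rw [hind, integral_indicator measurableSet_Icc]
  by_cases ht : 0 ≤ t
  · rw [integral_Icc_eq_integral_Ioc, ← intervalIntegral.integral_of_le ht,
      integral_one_sub_sum_poissonWeight_mul, erlangCDF, if_pos ht]
  · rw [Set.Icc_eq_empty (by linarith), Measure.restrict_empty, integral_zero_measure,
      erlangCDF, if_neg ht]

lemma lintegral_erlangCDF_sub_gammaMeasure {l : ℝ} (hl : 0 < l) (k : ℕ) {n : ℕ} (hn : 0 < n)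
    (t : ℝ) :
    ∫⁻ x, ENNReal.ofReal (erlangCDF l k (t - x)) ∂(gammaMeasure n l) =
      ENNReal.ofReal (erlangCDF l (n + k) t) := by
  obtain ⟨m, rfl⟩ := Nat.exists_eq_add_one_of_ne_zero hn.ne'
  have hm : (0 : ℝ) < (m + 1 : ℕ) := by positivity
  have hF : Measurable fun x => erlangCDF l k (t - x) :=
    (measurable_erlangCDF l k).comp (measurable_const.sub measurable_id)
  have hpdf : Measurable (gammaPDF (m + 1 : ℕ) l) := (measurable_gammaPDFReal _ _).ennreal_ofReal
  rw [gammaMeasure, lintegral_withDensity_eq_lintegral_mul _ hpdf hF.ennreal_ofReal,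
    ← integral_erlangCDF_sub_mul_gammaPDFReal, ofReal_integral_eq_lintegral_ofReal]
  · congr 1 with x
    simp only [Pi.mul_apply, gammaPDF]
    rw [← ENNReal.ofReal_mul (gammaPDFReal_nonneg hm hl x), mul_comm]
  · refine (integrable_gammaPDFReal hm hl).bdd_mul hF.aestronglyMeasurable (c := 1)
      (ae_of_all _ fun x => ?_)
    rw [Real.norm_eq_abs, abs_le]
    exact ⟨by linarith [erlangCDF_nonneg hl.le k (t - x)], erlangCDF_le_one hl.le k (t - x)⟩
  · exact ae_of_all _ fun x =>
      mul_nonneg (erlangCDF_nonneg hl.le _ _) (gammaPDFReal_nonneg hm hl x)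

lemma measure_add_le_eq_lintegral {Ω : Type*} [MeasurableSpace Ω] {μ : Measure Ω}
    [IsFiniteMeasure μ] {Y Z : Ω → ℝ} (hY : Measurable Y) (hZ : Measurable Z)
    (hYZ : IndepFun Y Z μ) (t : ℝ) :
    μ {ω | Y ω + Z ω ≤ t} = ∫⁻ z, μ {ω | Y ω ≤ t - z} ∂(μ.map Z) := by
  have hS : MeasurableSet {p : ℝ × ℝ | p.1 + p.2 ≤ t} :=
    measurableSet_le (by fun_prop) (by fun_prop)
  calc μ {ω | Y ω + Z ω ≤ t} = μ.map (Y + Z) (Set.Iic t) := by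
        rw [Measure.map_apply (hY.add hZ) measurableSet_Iic]; rfl
    _ = ((μ.map Y).prod (μ.map Z)) {p | p.1 + p.2 ≤ t} := by
        rw [hYZ.map_add_eq_map_conv_map hY hZ, Measure.conv,
          Measure.map_apply measurable_add measurableSet_Iic]; rfl
    _ = ∫⁻ z, μ {ω | Y ω ≤ t - z} ∂(μ.map Z) := by
        rw [Measure.prod_apply_symm hS]
        congr with z
        have hslice : (fun y => (y, z)) ⁻¹' {p : ℝ × ℝ | p.1 + p.2 ≤ t} = Set.Iic (t - z) := by
          ext y; simp [le_sub_iff_add_le]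
        rw [hslice, Measure.map_apply hY measurableSet_Iic]
        rfl

lemma ae_nonneg_of_map_eq_gammaMeasure {Ω : Type*} [MeasurableSpace Ω] {μ : Measure Ω}
    {Y : Ω → ℝ} (hY : Measurable Y) {a r : ℝ} (hlaw : μ.map Y = gammaMeasure a r) :
    ∀ᵐ ω ∂μ, 0 ≤ Y ω := by
  rw [ae_iff]
  simp only [not_le]
  change μ (Y ⁻¹' Set.Iio 0) = 0
  rw [← Measure.map_apply hY measurableSet_Iio, hlaw, gammaMeasure,
    withDensity_apply _ measurableSet_Iio, lintegral_gammaPDF_of_nonpos le_rfl]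

lemma integral_neg_one_pow_eq_one_sub_two_mul_tsum {Ω : Type*} [MeasurableSpace Ω]
    {μ : Measure Ω} [IsProbabilityMeasure μ] {N : Ω → ℕ} {A : ℕ → Set Ω}
    (hA : ∀ k, MeasurableSet (A k)) (hN : ∀ᵐ ω ∂μ, ∀ k, N ω = k ↔ ω ∈ A k) :
    ∫ ω, (-1 : ℝ) ^ N ω ∂μ = 1 - 2 * ∑' k, μ.real (A (2 * k + 1)) := by
  set O := ⋃ k, A (2 * k + 1)
  have hO : MeasurableSet O := MeasurableSet.iUnion fun k => hA _
  have hpar : (fun ω => (-1 : ℝ) ^ N ω) =ᵐ[μ] fun ω => 1 - 2 * O.indicator 1 ω := by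
    filter_upwards [hN] with ω hω
    have hmem : ω ∈ O ↔ Odd (N ω) := by simp [O, ← hω, Odd]
    rcases Nat.even_or_odd (N ω) with h | h
    · rw [h.neg_one_pow, Set.indicator_of_notMem (hmem.not.2 (Nat.not_odd_iff_even.2 h))]
      ring
    · rw [h.neg_one_pow, Set.indicator_of_mem (hmem.2 h)]
      norm_num
  have hdisj : Pairwise (Function.onFun (AEDisjoint μ) fun k => A (2 * k + 1)) := by
    intro i j hij
    rw [Function.onFun, AEDisjoint, measure_eq_zero_iff_ae_notMem]
    filter_upwards [hN] with ω hω ⟨hi, hj⟩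
    have := ((hω _).2 hi).symm.trans ((hω _).2 hj)
    omega
  have hO_real : μ.real O = ∑' k, μ.real (A (2 * k + 1)) := by
    rw [measureReal_def, measure_iUnion₀ hdisj fun k => (hA _).nullMeasurableSet,
      ENNReal.tsum_toReal_eq fun k => measure_ne_top μ _]
    rfl
  rw [integral_congr_ae hpar,
    integral_sub (integrable_const 1) (((integrable_const 1).indicator hO).const_mul 2),
    integral_const, integral_const_mul, integral_indicator_one hO, hO_real]
  simp

lemma exists_le_lt_succ {T : ℕ → ℝ} {s : ℝ} (h0 : T 0 ≤ s) (h : ∃ m, s < T m) :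
    ∃ k, T k ≤ s ∧ s < T (k + 1) := by
  by_contra! H
  obtain ⟨m, hm⟩ := h
  have hle : ∀ k, T k ≤ s := fun k => Nat.rec h0 (fun k hk => H k hk) k
  exact (hm.trans_le (hle m)).false

lemma setOf_succ_le_eq_range {T : ℕ → ℝ} (hT : Monotone T) {s : ℝ} {k : ℕ} (hk : T k ≤ s)
    (hk' : s < T (k + 1)) : {m | T (m + 1) ≤ s} = range k := by
  ext m
  simp only [Set.mem_ofPred_eq, coe_range, Set.mem_Iio]
  constructor
  · intro hm
    by_contra! hkm
    exact (hk'.trans_le (hT (by omega))).not_ge hm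
  · intro hm
    exact (hT (by omega)).trans hk

lemma ncard_setOf_succ_le_eq_iff {T : ℕ → ℝ} (hT : Monotone T) {s : ℝ} (h0 : T 0 ≤ s)
    (h : ∃ m, s < T m) (k : ℕ) : {m | T (m + 1) ≤ s}.ncard = k ↔ T k ≤ s ∧ s < T (k + 1) := by
  obtain ⟨k₀, hk₀, hk₀'⟩ := exists_le_lt_succ h0 h
  constructor
  · rintro rfl
    rw [setOf_succ_le_eq_range hT hk₀ hk₀', Set.ncard_coe_finset, card_range]
    exact ⟨hk₀, hk₀'⟩
  · rintro ⟨hk, hk'⟩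
    rw [setOf_succ_le_eq_range hT hk hk', Set.ncard_coe_finset, card_range]

section Renewal

variable {Ω : Type*} {X : ℕ → Ω → ℝ}

lemma renewalTime_eq_sum (m : ℕ) : renewalTime X m = ∑ i ∈ range m, X i := by
  funext ω; simp [renewalTime]

lemma renewalTime_succ (m : ℕ) : renewalTime X (m + 1) = renewalTime X m + X m := by
  simp [renewalTime_eq_sum, sum_range_succ]

lemma monotone_renewalTime {ω : Ω} (hX : ∀ i, 0 ≤ X i ω) : Monotone fun m => renewalTime X m ω :=
  monotone_nat_of_le_succ fun m => by simp [renewalTime_succ, hX m]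

lemma renewalCount_eq_iff {ω : Ω} (hX : ∀ i, 0 ≤ X i ω) {s : ℝ} (hs : 0 ≤ s)
    (h : ∃ m, s < renewalTime X m ω) (k : ℕ) :
    renewalCount X s ω = k ↔ renewalTime X k ω ≤ s ∧ s < renewalTime X (k + 1) ω :=
  ncard_setOf_succ_le_eq_iff (monotone_renewalTime hX) (by simpa [renewalTime] using hs) h k

variable [MeasurableSpace Ω]

lemma measurable_renewalTime (hX : ∀ i, Measurable (X i)) (m : ℕ) :
    Measurable (renewalTime X m) :=
  Finset.measurable_sum _ fun i _ => hX i

lemma measure_renewalTime_le {μ : Measure Ω} [IsProbabilityMeasure μ] {l : ℝ} (hl : 0 < l)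
    {n : ℕ} (hn : 0 < n) (hX : ∀ i, Measurable (X i)) (hindep : iIndepFun X μ)
    (hlaw : ∀ i, μ.map (X i) = gammaMeasure n l) (m : ℕ) (t : ℝ) :
    μ {ω | renewalTime X m ω ≤ t} = ENNReal.ofReal (erlangCDF l (n * m) t) := by
  induction m generalizing t with
  | zero =>
    by_cases ht : 0 ≤ t <;> simp [renewalTime, erlangCDF, ht]
  | succ m ih =>
    have hindep_m : IndepFun (renewalTime X m) (X m) μ := by
      rw [renewalTime_eq_sum]
      exact hindep.indepFun_finsetSum_of_notMem hX notMem_range_self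
    rw [renewalTime_succ, mul_add_one, add_comm (n * m),
      ← lintegral_erlangCDF_sub_gammaMeasure hl _ hn, ← hlaw m]
    simp only [← ih]
    exact measure_add_le_eq_lintegral (measurable_renewalTime hX m) (hX m) hindep_m t

lemma measureReal_renewalTime_le {μ : Measure Ω} [IsProbabilityMeasure μ] {l : ℝ} (hl : 0 < l)
    {n : ℕ} (hn : 0 < n) (hX : ∀ i, Measurable (X i)) (hindep : iIndepFun X μ)
    (hlaw : ∀ i, μ.map (X i) = gammaMeasure n l) (m : ℕ) (t : ℝ) :
    μ.real {ω | renewalTime X m ω ≤ t} = erlangCDF l (n * m) t := by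
  rw [measureReal_def, measure_renewalTime_le hl hn hX hindep hlaw,
    ENNReal.toReal_ofReal (erlangCDF_nonneg hl.le _ _)]

lemma ae_exists_lt_renewalTime {μ : Measure Ω} [IsProbabilityMeasure μ] {l : ℝ} (hl : 0 < l)
    {n : ℕ} (hn : 0 < n) (hX : ∀ i, Measurable (X i)) (hindep : iIndepFun X μ)
    (hlaw : ∀ i, μ.map (X i) = gammaMeasure n l) (s : ℝ) :
    ∀ᵐ ω ∂μ, ∃ m, s < renewalTime X m ω := by
  have hlim : Filter.Tendsto (fun m => ENNReal.ofReal (erlangCDF l (n * m) s)) Filter.atTop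
      (nhds 0) := by
    simpa using ENNReal.tendsto_ofReal
      ((tendsto_erlangCDF_atTop l s).comp (Filter.tendsto_id.const_mul_atTop' hn))
  rw [ae_iff]
  simp only [not_exists, not_lt]
  exact nonpos_iff_eq_zero.1 <| ge_of_tendsto' hlim fun m =>
    (measure_mono fun ω (hω : ∀ m, renewalTime X m ω ≤ s) => hω m).trans_eq
      (measure_renewalTime_le hl hn hX hindep hlaw m s)

lemma measureReal_renewalTime_le_sdiff {μ : Measure Ω} [IsFiniteMeasure μ]
    (hX : ∀ i, Measurable (X i)) (hX0 : ∀ᵐ ω ∂μ, ∀ i, 0 ≤ X i ω) (k : ℕ) (s : ℝ) :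
    μ.real ({ω | renewalTime X k ω ≤ s} \ {ω | renewalTime X (k + 1) ω ≤ s}) =
      μ.real {ω | renewalTime X k ω ≤ s} - μ.real {ω | renewalTime X (k + 1) ω ≤ s} := by
  rw [measureReal_sdiff' (measurableSet_le (measurable_renewalTime hX _) measurable_const)]
  congr 1
  refine measureReal_congr ?_
  filter_upwards [hX0] with ω hω
  simp only [eq_iff_iff]
  exact or_iff_left_of_imp ((monotone_renewalTime hω (Nat.le_succ k)).trans)

end Renewal

/-- for i.i.d. Erlang(λ, n) inter-renewal times,
`E[(-1)^{N'_s}] = 1 - 2 e^{-λs} Σ_{k=0}^∞ Σ_{j=2nk+n}^{2nk+2n-1} (λs)^j / j!`. -/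
theorem parity_mean_erlang {Ω : Type*} [MeasurableSpace Ω]
    (prob : Measure Ω) [IsProbabilityMeasure prob]
    (l : ℝ) (hl : 0 < l) (n : ℕ) (hn : 0 < n)
    (X : ℕ → Ω → ℝ) (hmeas : ∀ i, Measurable (X i))
    (hindep : iIndepFun X prob)
    (hlaw : ∀ i, Measure.map (X i) prob = gammaMeasure n l)
    (s : ℝ) (hs : 0 ≤ s) :
    ∫ ω, ((-1 : ℝ)) ^ (renewalCount X s ω) ∂prob =
      1 - 2 * Real.exp (-l * s) *
        ∑' k : ℕ, ∑ j ∈ Finset.Ico (2 * n * k + n) (2 * n * k + 2 * n),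
          (l * s) ^ j / (Nat.factorial j) := by
  have hX0 : ∀ᵐ ω ∂prob, ∀ i, 0 ≤ X i ω :=
    ae_all_iff.2 fun i => ae_nonneg_of_map_eq_gammaMeasure (hmeas i) (hlaw i)
  set A : ℕ → Set Ω := fun k =>
    {ω | renewalTime X k ω ≤ s} \ {ω | renewalTime X (k + 1) ω ≤ s}
  have hA : ∀ k, MeasurableSet (A k) := fun k =>
    (measurableSet_le (measurable_renewalTime hmeas k) measurable_const).diff
      (measurableSet_le (measurable_renewalTime hmeas (k + 1)) measurable_const)
  have hcount : ∀ᵐ ω ∂prob, ∀ k, renewalCount X s ω = k ↔ ω ∈ A k := by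
    filter_upwards [hX0, ae_exists_lt_renewalTime hl hn hmeas hindep hlaw s] with ω hXω hω k
    simp [A, renewalCount_eq_iff hXω hs hω k]
  have hterm : ∀ k, prob.real (A (2 * k + 1)) = exp (-l * s) *
      ∑ j ∈ Finset.Ico (2 * n * k + n) (2 * n * k + 2 * n), (l * s) ^ j / j ! := by
    intro k
    rw [measureReal_renewalTime_le_sdiff hmeas hX0,
      measureReal_renewalTime_le hl hn hmeas hindep hlaw,
      measureReal_renewalTime_le hl hn hmeas hindep hlaw,
      erlangCDF_sub_erlangCDF l (Nat.mul_le_mul_left n (Nat.le_succ _)) hs,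
      show n * (2 * k + 1) = 2 * n * k + n by ring,
      show n * (2 * k + 1 + 1) = 2 * n * k + 2 * n by ring, mul_sum]
    simp only [poissonWeight, neg_mul, mul_div_assoc]
  rw [integral_neg_one_pow_eq_one_sub_two_mul_tsum hA hcount, tsum_congr hterm, tsum_mul_left,
    mul_assoc]
end
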